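/- If T is a bounded linear operator on a complex Hilbert space with T³ = 0, then w(T)³ = (1/4)·w(T²T* + T*T² + TT*T). -/

import Mathlib

open Complex

variable {H : Type*} [NormedAddCommGroup H] [InnerProductSpace ℂ H] [CompleteSpace H]

/-- The numerical radius `w(T) = sup {|⟨Tx,x⟩| : ‖x‖ = 1}`. -/
noncomputable def numRadius (T : H →L[ℂ] H) : ℝ :=
  sSup {r : ℝ | ∃ x : H, ‖x‖ = 1 ∧ r = ‖(inner ℂ (T x) x : ℂ)‖}

/-- The Crawford number `m(T) = inf {|⟨Tx,x⟩| : ‖x‖ = 1}`. -/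
noncomputable def crawford (T : H →L[ℂ] H) : ℝ :=
  sInf {r : ℝ | ∃ x : H, ‖x‖ = 1 ∧ r = ‖(inner ℂ (T x) x : ℂ)‖}

/-- The real part `Re(T) = (T + T*)/2`. -/
noncomputable def reOp (T : H →L[ℂ] H) : H →L[ℂ] H := (2 : ℂ)⁻¹ • (T + star T)

/-- The imaginary part `Im(T) = (T - T*)/(2i)`. -/
noncomputable def imOp (T : H →L[ℂ] H) : H →L[ℂ] H := (2 * Complex.I)⁻¹ • (T - star T)

/-!
The numerical radius is `w(T) = sup_{|z| = 1} ‖Re (z T)‖`: the norm of the self-adjoint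
`Re (z T)` is `sup_{‖x‖ = 1} |re ⟨z T x, x⟩| ≤ w(T)`, and `|⟨T x, x⟩| = ⟨Re (z T) x, x⟩` for a
suitable `z`.
When `T³ = 0` and `|z| = 1`, expanding `(z T + z⁻¹ T*)³ / 8` leaves exactly
`Re (z S) / 4` with `S = T² T* + T* T² + T T* T`; since `‖A³‖ = ‖A‖³` for self-adjoint `A`,
`‖Re (z S)‖ = 4 ‖Re (z T)‖³`, and taking the supremum over `z` gives `w(S) = 4 w(T)³`.
-/

open ContinuousLinearMap Metric Set ComplexConjugate

theorem IsSelfAdjoint.norm_pow {E : Type*} [NormedRing E] [StarRing E] [CStarRing E] {a : E}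
    (ha : IsSelfAdjoint a) {n : ℕ} (hn : 0 < n) : ‖a ^ n‖ = ‖a‖ ^ n := by
  refine le_antisymm (norm_pow_le' a hn) ?_
  rcases (norm_nonneg a).eq_or_lt with h0 | hpos
  · rw [← h0, zero_pow hn.ne']
    exact norm_nonneg _
  have hlt : n < 2 ^ n := Nat.lt_two_pow_self
  refine le_of_mul_le_mul_right ?_ (pow_pos hpos (2 ^ n - n))
  calc ‖a‖ ^ n * ‖a‖ ^ (2 ^ n - n) = ‖a ^ 2 ^ n‖ := by
        rw [← pow_add, Nat.add_sub_cancel' hlt.le, ha.norm_pow_two_pow]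
    _ = ‖a ^ n * a ^ (2 ^ n - n)‖ := by rw [← pow_add, Nat.add_sub_cancel' hlt.le]
    _ ≤ ‖a ^ n‖ * ‖a ^ (2 ^ n - n)‖ := norm_mul_le _ _
    _ ≤ ‖a ^ n‖ * ‖a‖ ^ (2 ^ n - n) := by gcongr; exact norm_pow_le' a (Nat.sub_pos_of_lt hlt)

section NumericalRadius

variable {E : Type*} [NormedAddCommGroup E] [InnerProductSpace ℂ E] (T : E →L[ℂ] E)

lemma numRadius_nonneg : 0 ≤ numRadius T :=
  Real.sSup_nonneg (by rintro r ⟨x, -, rfl⟩; positivity)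

lemma norm_inner_apply_self_le_opNorm {x : E} (hx : ‖x‖ = 1) : ‖inner ℂ (T x) x‖ ≤ ‖T‖ := by
  simpa [hx] using (norm_inner_le_norm (T x) x).trans
    (mul_le_mul_of_nonneg_right (T.le_opNorm x) (norm_nonneg x))

lemma norm_inner_apply_self_le_numRadius {x : E} (hx : ‖x‖ = 1) :
    ‖inner ℂ (T x) x‖ ≤ numRadius T := by
  refine le_csSup ⟨‖T‖, ?_⟩ ⟨x, hx, rfl⟩
  rintro r ⟨y, hy, rfl⟩
  exact norm_inner_apply_self_le_opNorm T hy

lemma numRadius_le {c : ℝ} (hc : 0 ≤ c) (h : ∀ x : E, ‖x‖ = 1 → ‖inner ℂ (T x) x‖ ≤ c) :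
    numRadius T ≤ c :=
  Real.sSup_le (by rintro r ⟨x, hx, rfl⟩; exact h x hx) hc

lemma norm_inner_apply_self_le_numRadius_mul_sq (x : E) :
    ‖inner ℂ (T x) x‖ ≤ numRadius T * ‖x‖ ^ 2 := by
  rcases eq_or_ne x 0 with rfl | hx
  · simp
  have hscale : ∀ (c : ℂ) (u : E), ‖inner ℂ (T (c • u)) (c • u)‖ = ‖c‖ ^ 2 * ‖inner ℂ (T u) u‖ :=
    fun c u => by simp [sq, mul_assoc, mul_comm]
  have hu : ‖(‖x‖⁻¹ : ℂ) • x‖ = 1 := norm_smul_inv_norm hx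
  have hxu : (‖x‖ : ℂ) • (‖x‖⁻¹ : ℂ) • x = x := by simp [smul_smul, norm_ne_zero_iff.mpr hx]
  rw [← hxu, hscale, hxu, Complex.norm_real, norm_norm, mul_comm]
  exact mul_le_mul_of_nonneg_right (norm_inner_apply_self_le_numRadius T hu) (sq_nonneg _)

lemma exists_norm_inner_eq_reApplyInnerSelf_smul (x : E) :
    ∃ z ∈ sphere (0 : ℂ) 1, ‖inner ℂ (T x) x‖ = (z • T).reApplyInnerSelf x := by
  set c := inner ℂ (T x) x
  obtain ⟨w, hw, hc⟩ : ∃ w : ℂ, ‖w‖ = 1 ∧ c = ‖c‖ * w :=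
    ⟨_, norm_exp_ofReal_mul_I _, (norm_mul_exp_arg_mul_I c).symm⟩
  refine ⟨w, mem_sphere_zero_iff_norm.mpr hw, ?_⟩
  calc ‖c‖ = RCLike.re (conj w * (‖c‖ * w)) := by rw [mul_left_comm, conj_mul', hw]; simp
    _ = (w • T).reApplyInnerSelf x := by
      rw [← hc, reApplyInnerSelf_apply, smul_apply, inner_smul_left]

end NumericalRadius

section RealPart

variable {E : Type*} [NormedAddCommGroup E] [InnerProductSpace ℂ E] [CompleteSpace E]
  (B : E →L[ℂ] E)

lemma isSelfAdjoint_reOp : IsSelfAdjoint (reOp B) := by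
  simp [IsSelfAdjoint, reOp, add_comm]

lemma reApplyInnerSelf_reOp (x : E) : (reOp B).reApplyInnerSelf x = B.reApplyInnerSelf x := by
  have hstar : re (inner ℂ (star B x) x) = re (inner ℂ (B x) x) := by
    rw [star_eq_adjoint, adjoint_inner_left, ← inner_conj_symm, conj_re]
  simp only [reApplyInnerSelf_apply, reOp, RCLike.re_to_complex, smul_apply, add_apply,
    inner_smul_left, inner_add_left, mul_re, add_re, hstar]
  norm_num
  ring

lemma norm_reOp_smul_le_numRadius {z : ℂ} (hz : ‖z‖ = 1) : ‖reOp (z • B)‖ ≤ numRadius B := by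
  rw [norm_eq_iSup_rayleighQuotient _ (isSelfAdjoint_reOp _).isSymmetric]
  refine ciSup_le fun x => ?_
  rw [rayleighQuotient, reApplyInnerSelf_reOp, reApplyInnerSelf_apply, abs_div, abs_sq]
  refine div_le_of_le_mul₀ (sq_nonneg _) (numRadius_nonneg B) ?_
  calc |RCLike.re (inner ℂ ((z • B) x) x)| ≤ ‖inner ℂ ((z • B) x) x‖ := RCLike.abs_re_le_norm _
    _ = ‖inner ℂ (B x) x‖ := by simp [hz]
    _ ≤ numRadius B * ‖x‖ ^ 2 := norm_inner_apply_self_le_numRadius_mul_sq B x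

lemma isLUB_norm_reOp_smul :
    IsLUB ((fun z : ℂ => ‖reOp (z • B)‖) '' sphere 0 1) (numRadius B) := by
  refine ⟨?_, fun c hc => ?_⟩
  · rintro _ ⟨z, hz, rfl⟩
    exact norm_reOp_smul_le_numRadius B (norm_eq_of_mem_sphere ⟨z, hz⟩)
  have hc' : ∀ z ∈ sphere (0 : ℂ) 1, ‖reOp (z • B)‖ ≤ c := fun z hz => hc ⟨z, hz, rfl⟩
  refine numRadius_le B ((norm_nonneg _).trans (hc' 1 (by simp))) fun x hx => ?_
  obtain ⟨z, hz, hxz⟩ := exists_norm_inner_eq_reApplyInnerSelf_smul B x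
  calc ‖inner ℂ (B x) x‖ = (reOp (z • B)).reApplyInnerSelf x := by rw [hxz, reApplyInnerSelf_reOp]
    _ ≤ ‖reOp (z • B)‖ := (le_abs_self _).trans <| by
        simpa [rayleighQuotient, hx] using rayleighQuotient_le_norm (reOp (z • B)) x
    _ ≤ c := hc' z hz

lemma reOp_smul_pow_three {T : E →L[ℂ] E} (hT : T ^ 3 = 0) {z : ℂ} (hz : ‖z‖ = 1) :
    reOp (z • T) ^ 3
      = (4 : ℂ)⁻¹ • reOp (z • (T ^ 2 * star T + star T * T ^ 2 + T * star T * T)) := by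
  have h3 : T * (T * T) = 0 := by rw [← hT]; noncomm_ring
  have hs3 : star T * (star T * star T) = 0 := by simpa [mul_assoc] using congrArg star h3
  have hz0 : z ≠ 0 := by rintro rfl; simp at hz
  have hzc : conj z = z⁻¹ := by rw [inv_def, normSq_eq_norm_sq, hz]; simp
  simp only [reOp, star_smul, star_add, star_star, Complex.star_def, hzc, pow_succ, pow_zero,
    one_mul, star_mul]
  simp only [smul_add, smul_smul, mul_add, add_mul, smul_mul_assoc, mul_smul_comm, mul_assoc,
    h3, hs3, smul_zero, zero_add, add_zero]
  match_scalars <;> field_simp <;> ring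

end RealPart

theorem stmt3 (T : H →L[ℂ] H) (h : T ^ 3 = 0) :
    numRadius T ^ 3
      = (1/4) * numRadius (T ^ 2 * star T + star T * T ^ 2 + T * star T * T) := by
  set S := T ^ 2 * star T + star T * T ^ 2 + T * star T * T with hS_def
  have hnorm : ∀ z ∈ sphere (0 : ℂ) 1, ‖reOp (z • S)‖ = 4 * ‖reOp (z • T)‖ ^ 3 := by
    intro z hz
    rw [← (isSelfAdjoint_reOp _).norm_pow three_pos,
      reOp_smul_pow_three h (norm_eq_of_mem_sphere ⟨z, hz⟩), ← hS_def, norm_smul,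
      norm_inv, Complex.norm_ofNat]
    ring
  have hS := isLUB_norm_reOp_smul S
  rw [image_congr hnorm] at hS
  have hT : IsLUB ((fun t : ℝ => 4 * t ^ 3) '' ((fun z : ℂ => ‖reOp (z • T)‖) '' sphere 0 1))
      (4 * numRadius T ^ 3) := by
    refine (isLUB_norm_reOp_smul T).isLUB_of_tendsto ?_ (by simp [NormedSpace.sphere_nonempty]) ?_
    · rintro _ ⟨a, -, rfl⟩ _ ⟨b, -, rfl⟩ hab
      dsimp only
      gcongr
    · exact ((continuous_const.mul (continuous_pow 3)).tendsto _).mono_left nhdsWithin_le_nhds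
  rw [image_image] at hT
  linarith [hS.unique hT]
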